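/- arXiv:1606.07010 — 4 statements merged into one kernel-verified Lean document; each statement's English description precedes it below -/
import Mathlib

section
/- Let α ∈ (0,1], let t > 0, and let f, g : [0,∞) → ℝ be α-differentiable at t. Then the product f·g is α-differentiable at t and T_α(f g)(t) = f(t)·T_α(g)(t) + g(t)·T_α(f)(t). -/
noncomputable section
open Real Filter Topology

/-- The conformable fractional derivative of order `α` of `f` at `t`:
`f` is `α`-differentiable at `t` with conformable derivative `L` if
`(f (t + ε * t^(1-α)) - f t) / ε → L` as `ε → 0`. -/
def HasConformableDerivAt (α : ℝ) (f : ℝ → ℝ) (L t : ℝ) : Prop :=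
  Tendsto (fun ε : ℝ => (f (t + ε * t ^ (1 - α)) - f t) / ε) (𝓝[≠] (0 : ℝ)) (𝓝 L)

theorem hasConformableDerivAt_iff_hasDerivAt {α : ℝ} {f : ℝ → ℝ} {L t : ℝ} :
    HasConformableDerivAt α f L t ↔ HasDerivAt (fun ε => f (t + ε * t ^ (1 - α))) L 0 := by
  simp only [HasConformableDerivAt, hasDerivAt_iff_tendsto_slope_zero, zero_add, zero_mul,
    add_zero, smul_eq_mul, inv_mul_eq_div]

theorem conformable_mul_general (α : ℝ)
    (t : ℝ) (f g : ℝ → ℝ) (Tf Tg : ℝ)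
    (hf : HasConformableDerivAt α f Tf t)
    (hg : HasConformableDerivAt α g Tg t) :
    HasConformableDerivAt α (fun x => f x * g x) (f t * Tg + g t * Tf) t := by
  rw [hasConformableDerivAt_iff_hasDerivAt] at *
  refine (hf.mul hg).congr_deriv ?_
  simp only [zero_mul, add_zero]
  ring

/-- Product rule: `T_α (f * g)(t) = f t * T_α g (t) + g t * T_α f (t)`. -/
theorem conformable_mul (α : ℝ) (hα : α ∈ Set.Ioc (0 : ℝ) 1)
    (t : ℝ) (ht : 0 < t) (f g : ℝ → ℝ) (Tf Tg : ℝ)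
    (hf : HasConformableDerivAt α f Tf t)
    (hg : HasConformableDerivAt α g Tg t) :
    HasConformableDerivAt α (fun x => f x * g x) (f t * Tg + g t * Tf) t :=
  conformable_mul_general α t f g Tf Tg hf hg
end
end

section
/- Let α ∈ (0,1], let t > 0, and let f, g : [0,∞) → ℝ be α-differentiable at t with g(t) ≠ 0. Then the quotient f/g is α-differentiable at t and T_α(f/g)(t) = (g(t)·T_α(f)(t) − f(t)·T_α(g)(t)) / g(t)². -/
noncomputable section
open Real Filter Topology

theorem conformable_div_general (α : ℝ)
    (t : ℝ) (f g : ℝ → ℝ) (Tf Tg : ℝ)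
    (hf : HasConformableDerivAt α f Tf t)
    (hg : HasConformableDerivAt α g Tg t)
    (hgt : g t ≠ 0) :
    HasConformableDerivAt α (fun x => f x / g x)
      ((g t * Tf - f t * Tg) / (g t) ^ 2) t := by
  rw [hasConformableDerivAt_iff_hasDerivAt] at hf hg ⊢
  have hquot := hf.div hg (by simpa using hgt)
  simp only [zero_mul, add_zero] at hquot
  rwa [mul_comm Tf] at hquot

/-- Quotient rule:
`T_α (f / g)(t) = (g t * T_α f (t) - f t * T_α g (t)) / (g t)^2`. -/
theorem conformable_div (α : ℝ) (hα : α ∈ Set.Ioc (0 : ℝ) 1)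
    (t : ℝ) (ht : 0 < t) (f g : ℝ → ℝ) (Tf Tg : ℝ)
    (hf : HasConformableDerivAt α f Tf t)
    (hg : HasConformableDerivAt α g Tg t)
    (hgt : g t ≠ 0) :
    HasConformableDerivAt α (fun x => f x / g x)
      ((g t * Tf - f t * Tg) / (g t) ^ 2) t :=
  conformable_div_general α t f g Tf Tg hf hg hgt
end
end

section
/- Let α ∈ (0,1] and λ ∈ ℝ. Suppose g : [0,∞) → ℝ is continuous on [0,∞), differentiable on (0,∞), and satisfies T_α(g)(t) = λ·g(t) for all t > 0 (equivalently, t^{1−α} g′(t) = λ g(t) for all t > 0). Then g(t) = g(0)·exp(λ t^α/α) for all t ≥ 0. In particular, the conformable eigenvalue problem T_α g = λ g with initial condition g(0) = c has the unique solution g(t) = c·exp(λ t^α/α). -/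
/-!
A conformable derivative at `t > 0` is an ordinary derivative rescaled by `t ^ (1 - α)`, so the
eigenvalue equation is the linear ODE `g' = λ t ^ (α - 1) g` on `(0, ∞)`, whose coefficient has the
primitive `λ t ^ α / α`. Hence `g t * exp (-(λ t ^ α / α))` has zero derivative on `(0, ∞)`; being
continuous on `[0, ∞)`, it is constant there, equal to its value `g 0` at the origin.
-/

noncomputable section
open Real Filter Topology

/-- Substituting `ε = h / t ^ (1 - α)` turns the conformable difference quotient into
`t ^ (1 - α)` times the ordinary one. -/
theorem HasConformableDerivAt.hasDerivAt {α L t : ℝ} {f : ℝ → ℝ} (ht : 0 < t)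
    (hf : HasConformableDerivAt α f L t) : HasDerivAt f (t ^ (α - 1) * L) t := by
  set c := t ^ (1 - α)
  have hc : c ≠ 0 := (rpow_pos_of_pos ht _).ne'
  have hscale : Tendsto (fun h : ℝ => h / c) (𝓝[≠] 0) (𝓝[≠] 0) := by
    refine tendsto_nhdsWithin_iff.mpr ⟨?_, ?_⟩
    · exact ((continuous_id.div_const c).tendsto' 0 0 (zero_div c)).mono_left nhdsWithin_le_nhds
    · filter_upwards [self_mem_nhdsWithin] with h hh using div_ne_zero hh hc
  have hcoef : t ^ (α - 1) = c⁻¹ := by rw [← rpow_neg ht.le, neg_sub]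
  rw [hasDerivAt_iff_tendsto_slope_zero, hcoef]
  refine ((hf.comp hscale).const_mul c⁻¹).congr' ?_
  filter_upwards [self_mem_nhdsWithin] with h hh
  have hshift : h / c * t ^ (1 - α) = h := div_mul_cancel₀ h hc
  simp only [Function.comp_apply, hshift, smul_eq_mul]
  field_simp

theorem ContinuousOn.eq_of_hasDerivAt_zero_Ioi {f : ℝ → ℝ} {a x : ℝ}
    (hf : ContinuousOn f (Set.Ici a)) (hf' : ∀ y, a < y → HasDerivAt f 0 y) (hx : a ≤ x) :
    f x = f a := by
  rcases hx.eq_or_lt with rfl | hax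
  · rfl
  obtain ⟨c, -, hc⟩ := exists_hasDerivAt_eq_slope f (fun _ => 0) hax
    (hf.mono Set.Icc_subset_Ici_self) fun y hy => hf' y hy.1
  rw [eq_comm, div_eq_zero_iff, sub_eq_zero, sub_eq_zero] at hc
  exact hc.resolve_right hax.ne'

theorem eq_mul_exp_of_hasDerivAt_mul {g A A' : ℝ → ℝ} {a : ℝ}
    (hg : ContinuousOn g (Set.Ici a)) (hA : ContinuousOn A (Set.Ici a))
    (hg' : ∀ x, a < x → HasDerivAt g (A' x * g x) x)
    (hA' : ∀ x, a < x → HasDerivAt A (A' x) x) {x : ℝ} (hx : a ≤ x) :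
    g x = g a * exp (A x - A a) := by
  have hconst : g x * exp (-A x) = g a * exp (-A a) := by
    refine (hg.mul hA.neg.rexp).eq_of_hasDerivAt_zero_Ioi (fun y hy => ?_) hx
    exact ((hg' y hy).mul (hA' y hy).neg.exp).congr_deriv (by ring)
  rw [exp_neg, exp_neg] at hconst
  rw [exp_sub, mul_div_assoc', eq_div_iff (exp_pos _).ne']
  field_simp at hconst
  linarith

theorem hasDerivAt_mul_rpow_div_self {α : ℝ} (hα : α ≠ 0) (c : ℝ) {t : ℝ} (ht : t ≠ 0) :
    HasDerivAt (fun s => c * s ^ α / α) (c * t ^ (α - 1)) t :=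
  (((hasDerivAt_rpow_const (Or.inl ht)).const_mul c).div_const α).congr_deriv (by field_simp)

theorem conformable_eigenvalue_unique_general (α : ℝ) (hα : α ∈ Set.Ioc (0 : ℝ) 1)
    (lam : ℝ) (g : ℝ → ℝ)
    (hcont : ContinuousOn g (Set.Ici (0 : ℝ)))
    (heig : ∀ t : ℝ, 0 < t → HasConformableDerivAt α g (lam * g t) t) :
    ∀ t : ℝ, 0 ≤ t → g t = g 0 * Real.exp (lam * t ^ α / α) := by
  intro t ht
  have hα0 : α ≠ 0 := hα.1.ne'
  have hA : Continuous fun s : ℝ => lam * s ^ α / α :=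
    (continuous_const.mul (continuous_rpow_const hα.1.le)).div_const α
  have hg' : ∀ s, 0 < s → HasDerivAt g (lam * s ^ (α - 1) * g s) s := fun s hs =>
    ((heig s hs).hasDerivAt hs).congr_deriv (by ring)
  have hsol := eq_mul_exp_of_hasDerivAt_mul hcont hA.continuousOn hg'
    (fun s hs => hasDerivAt_mul_rpow_div_self hα0 lam hs.ne') ht
  simpa [zero_rpow hα0] using hsol

/-- Uniqueness for the conformable eigenvalue problem: if `g` is continuous on
`[0, ∞)`, differentiable on `(0, ∞)`, and `T_α g (t) = lam * g t` for all `t > 0`,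
then `g t = g 0 * exp (lam * t^α / α)` for all `t ≥ 0`. In particular the problem
`T_α g = lam * g`, `g 0 = c` has the unique solution `g t = c * exp (lam * t^α / α)`. -/
theorem conformable_eigenvalue_unique (α : ℝ) (hα : α ∈ Set.Ioc (0 : ℝ) 1)
    (lam : ℝ) (g : ℝ → ℝ)
    (hcont : ContinuousOn g (Set.Ici (0 : ℝ)))
    (hdiff : DifferentiableOn ℝ g (Set.Ioi (0 : ℝ)))
    (heig : ∀ t : ℝ, 0 < t → HasConformableDerivAt α g (lam * g t) t) :
    ∀ t : ℝ, 0 ≤ t → g t = g 0 * Real.exp (lam * t ^ α / α) :=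
  conformable_eigenvalue_unique_general α hα lam g hcont heig
end
end

section
/- Let d ≥ 1, H ∈ (0,1/2), and define p(t,x,y) = (2π t^{2H})^{−d/2} exp(−‖x−y‖²/(2 t^{2H})) for t > 0 and x, y ∈ ℝ^d. Then for every t > 0 and x, y ∈ ℝ^d, the conformable fractional derivative of order 2H in the t variable satisfies T_{2H} p(t,x,y) = H Δ_x p(t,x,y), where Δ_x denotes the Laplacian in the x variable. -/
noncomputable section
open Real Filter Topology

/-- The Laplacian of `f : ℝ^d → ℝ` at `x`: the sum over the coordinate
directions of the second partial derivatives. -/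
def laplacian {d : ℕ} (f : EuclideanSpace ℝ (Fin d) → ℝ)
    (x : EuclideanSpace ℝ (Fin d)) : ℝ :=
  ∑ j : Fin d,
    fderiv ℝ (fun y => fderiv ℝ f y (EuclideanSpace.single j 1)) x
      (EuclideanSpace.single j 1)

/-- The transition density of fractional Brownian motion of Hurst index `H`:
the Gaussian density with mean `x` and covariance `t^(2H)` times the identity. -/
def fbmKernel (d : ℕ) (H : ℝ) (t : ℝ) (x y : EuclideanSpace ℝ (Fin d)) : ℝ :=
  (2 * Real.pi * t ^ (2 * H)) ^ (-(d : ℝ) / 2) *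
    Real.exp (-‖x - y‖ ^ 2 / (2 * t ^ (2 * H)))

/-!
`p(t, ·, y)` is the Gaussian kernel of variance `v = t^{2H}`, and a direct
computation gives the heat equation in the variance, `∂ᵥ p = Δₓ p / 2`. By the chain rule,
`∂ₜ p = 2H t^{2H-1} · Δₓ p / 2`. For a differentiable `f` the conformable derivative is
`T_α f(t) = t^{1-α} f'(t)`, so with `α = 2H` the powers of `t` cancel and `T_{2H} p = H Δₓ p`.
-/

theorem HasDerivAt.hasConformableDerivAt {f : ℝ → ℝ} {f' t : ℝ} (α : ℝ)
    (hf : HasDerivAt f f' t) : HasConformableDerivAt α f (t ^ (1 - α) * f') t := by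
  have hpath : HasDerivAt (fun ε : ℝ => t + ε * t ^ (1 - α)) (t ^ (1 - α)) 0 := by
    simpa using ((hasDerivAt_id (0 : ℝ)).mul_const (t ^ (1 - α))).const_add t
  have hcomp := (hf.scomp_of_eq (0 : ℝ) hpath (by simp)).tendsto_slope_zero
  rw [HasConformableDerivAt, ← smul_eq_mul]
  refine hcomp.congr fun ε => ?_
  simp [div_eq_inv_mul]

/-- The Gaussian kernel, parametrized by its variance `v` rather than by time. -/
def heatKernel (d : ℕ) (v : ℝ) (x y : EuclideanSpace ℝ (Fin d)) : ℝ :=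
  (2 * π * v) ^ (-(d : ℝ) / 2) * exp (-‖x - y‖ ^ 2 / (2 * v))

theorem fbmKernel_eq_heatKernel (d : ℕ) (H t : ℝ) (x y : EuclideanSpace ℝ (Fin d)) :
    fbmKernel d H t x y = heatKernel d (t ^ (2 * H)) x y := rfl

section HeatKernel

variable {d : ℕ} (v : ℝ) (x y : EuclideanSpace ℝ (Fin d))

theorem hasFDerivAt_heatKernel_left :
    HasFDerivAt (fun z => heatKernel d v z y)
      (-(heatKernel d v x y / v) • innerSL ℝ (x - y)) x := by
  have hexp := ((((hasFDerivAt_id x).sub_const y).norm_sq.neg).mul_const (2 * v)⁻¹).exp.const_mul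
    ((2 * π * v) ^ (-(d : ℝ) / 2))
  have hfun : (fun z => heatKernel d v z y)
      = fun z => (2 * π * v) ^ (-(d : ℝ) / 2) * exp (-‖z - y‖ ^ 2 * (2 * v)⁻¹) := by
    simp only [heatKernel, div_eq_mul_inv]
  rw [hfun]
  refine hexp.congr_fderiv ?_
  ext w
  simp only [div_eq_mul_inv, neg_mul, id_eq, Pi.neg_apply, mul_inv_rev, map_sub,
    ContinuousLinearMap.comp_id, smul_neg, neg_apply,
    smul_apply, sub_apply, coe_innerSL_apply,
    nsmul_eq_mul, Nat.cast_ofNat, smul_eq_mul, heatKernel, neg_smul, neg_inj]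
  ring

theorem fderiv_heatKernel_left_single (j : Fin d) :
    fderiv ℝ (fun z => heatKernel d v z y) x (EuclideanSpace.single j 1)
      = -(heatKernel d v x y / v) * (x j - y j) := by
  simp [(hasFDerivAt_heatKernel_left v x y).fderiv, EuclideanSpace.inner_single_right]

theorem fderiv_fderiv_heatKernel_left_single (j : Fin d) :
    fderiv ℝ (fun z => fderiv ℝ (fun w => heatKernel d v w y) z (EuclideanSpace.single j 1)) x
        (EuclideanSpace.single j 1)
      = heatKernel d v x y * ((x j - y j) ^ 2 / v ^ 2 - 1 / v) := by
  have hcoord : HasFDerivAt (fun z : EuclideanSpace ℝ (Fin d) => z j - y j)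
      (EuclideanSpace.proj j : EuclideanSpace ℝ (Fin d) →L[ℝ] ℝ) x :=
    (PiLp.hasFDerivAt_apply 2 x j).sub_const (y j)
  have hpartial := ((hasFDerivAt_heatKernel_left v x y).mul_const v⁻¹).neg.mul hcoord
  simp only [fderiv_heatKernel_left_single, div_eq_mul_inv (heatKernel d _ _ y)]
  rw [HasFDerivAt.fderiv (f := fun z => -(heatKernel d v z y * v⁻¹) * (z j - y j)) hpartial]
  simp only [Pi.neg_apply, neg_smul, map_sub, smul_neg, neg_neg, add_apply,
    neg_apply, smul_apply, PiLp.proj_apply,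
    PiLp.single_eq_same, smul_eq_mul, mul_one, sub_apply, coe_innerSL_apply,
    EuclideanSpace.inner_single_right, conj_trivial, one_mul, one_div]
  ring

theorem laplacian_heatKernel_left :
    laplacian (fun z => heatKernel d v z y) x
      = heatKernel d v x y * (‖x - y‖ ^ 2 / v ^ 2 - d / v) := by
  simp only [laplacian, fderiv_fderiv_heatKernel_left_single, ← Finset.mul_sum,
    Finset.sum_sub_distrib, ← Finset.sum_div, EuclideanSpace.real_norm_sq_eq, PiLp.sub_apply]
  simp

theorem hasDerivAt_heatKernel_variance {v : ℝ} (hv : v ≠ 0) :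
    HasDerivAt (fun w => heatKernel d w x y)
      (laplacian (fun z => heatKernel d v z y) x / 2) v := by
  have h2πv : 2 * π * v ≠ 0 := by positivity
  have hprefactor := ((hasDerivAt_id v).const_mul (2 * π)).rpow_const (p := -(d : ℝ) / 2)
    (Or.inl h2πv)
  have hexponent := (hasDerivAt_const v (-‖x - y‖ ^ 2)).div ((hasDerivAt_id v).const_mul 2)
    (mul_ne_zero two_ne_zero hv)
  refine (hprefactor.mul hexponent.exp).congr_deriv ?_
  rw [laplacian_heatKernel_left]
  simp only [heatKernel, id, Pi.div_apply]
  rw [Real.rpow_sub_one h2πv]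
  field_simp
  ring

end HeatKernel

theorem fbmKernel_conformableDeriv_eq_general (d : ℕ) (H : ℝ) :
    ∀ t : ℝ, 0 < t → ∀ x y : EuclideanSpace ℝ (Fin d),
      HasConformableDerivAt (2 * H) (fun s : ℝ => fbmKernel d H s x y)
        (H * laplacian (fun z => fbmKernel d H t z y) x) t := by
  intro t ht x y
  simp only [fbmKernel_eq_heatKernel]
  have hvariance : HasDerivAt (fun s : ℝ => s ^ (2 * H)) (2 * H * t ^ (2 * H - 1)) t := by
    simpa using Real.hasDerivAt_rpow_const (p := 2 * H) (Or.inl ht.ne')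
  have htime : HasDerivAt (fun s => heatKernel d (s ^ (2 * H)) x y)
      (laplacian (fun z => heatKernel d (t ^ (2 * H)) z y) x / 2 * (2 * H * t ^ (2 * H - 1))) t :=
    HasDerivAt.comp (h₂ := fun v => heatKernel d v x y) t
      (hasDerivAt_heatKernel_variance x y (rpow_pos_of_pos ht (2 * H)).ne') hvariance
  have hscale : t ^ (1 - 2 * H) * t ^ (2 * H - 1) = 1 := by
    rw [← rpow_add ht]
    norm_num
  convert htime.hasConformableDerivAt (2 * H) using 1
  linear_combination (-H * laplacian (fun z => heatKernel d (t ^ (2 * H)) z y) x) * hscale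

/-- The fBm transition density satisfies the conformable heat equation
`T_{2H} p(t,x,y) = H Δₓ p(t,x,y)`. -/
theorem fbmKernel_conformableDeriv_eq (d : ℕ) (hd : 1 ≤ d) (H : ℝ)
    (hH : H ∈ Set.Ioo (0 : ℝ) (1 / 2)) :
    ∀ t : ℝ, 0 < t → ∀ x y : EuclideanSpace ℝ (Fin d),
      HasConformableDerivAt (2 * H) (fun s : ℝ => fbmKernel d H s x y)
        (H * laplacian (fun z => fbmKernel d H t z y) x) t :=
  fbmKernel_conformableDeriv_eq_general d H
end
end
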